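/- arXiv:2310.17296 — 2 statements merged into one kernel-verified Lean document; each statement's English description precedes it below -/
import Mathlib

section
/- Let (π,T,S) be a covariant representation of L on L^p_ν(Ω). Then for every N ≥ 1 and every word (i₁,…,i_N) ∈ {1,…,n}^N one has T_{i₁}⋯T_{i_N} S_{i_N}⋯S_{i₁} = π(1_{X_{i₁…i_N}}), where X_{i₁…i_N} := {x ∈ X : x₁ = i₁, …, x_N = i_N} is the cylinder set determined by the word. -/
/-! Multiplying `π(1_{X_i}·(a∘φ))` on the right by `1 = Σ_j T_j S_j` and moving the weight of
`T_j` to the left through `π`, only the term `j = i` survives, and the covariance relation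
`T π(a) = π(a∘φ) T` turns it into `T_i π(a) S_i`. As `1_{X_{i₁…i_N}} = 1_{X_{i₁}}·(1_{X_{i₂…i_N}}∘φ)`,
induction on the length of the word gives the claim. -/

open MeasureTheory
open scoped ENNReal

noncomputable section

/-- The Bernoulli shift space `X = {1,…,n}^ℕ`, modelled as `ℕ → Fin n`. -/
abbrev BSpace (n : ℕ) := ℕ → Fin n

/-- The shift map `φ(x₁,x₂,x₃,…) = (x₂,x₃,…)`. -/
def shift (n : ℕ) (x : BSpace n) : BSpace n := fun k => x (k + 1)

lemma shift_continuous (n : ℕ) : Continuous (shift n) :=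
  continuous_pi fun k => continuous_apply (k + 1)

/-- The shift map as a continuous map. -/
def shiftCM (n : ℕ) : C(BSpace n, BSpace n) := ⟨shift n, shift_continuous n⟩

/-- The preimage section `iy = (i, y₁, y₂, …)` of the shift. -/
def cons (n : ℕ) (i : Fin n) (x : BSpace n) : BSpace n :=
  fun k => Nat.casesOn k i fun m => x m

lemma cons_continuous (n : ℕ) (i : Fin n) : Continuous (cons n i) := by
  apply continuous_pi
  intro k
  cases k with
  | zero => exact continuous_const
  | succ m => exact continuous_apply m

/-- The transfer (Ruelle–Perron–Frobenius) operator
`L(a)(y) = Σ_{x ∈ φ⁻¹(y)} ϱ(x) a(x) = Σ_{i=1}^n ϱ(iy) a(iy)`. -/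
def transfer (n : ℕ) (ϱ : C(BSpace n, ℝ)) (a : C(BSpace n, ℂ)) : C(BSpace n, ℂ) :=
  ⟨fun y => ∑ i : Fin n, (ϱ (cons n i y) : ℂ) * a (cons n i y), by
    refine continuous_finset_sum _ fun i _ => ?_
    exact (Complex.continuous_ofReal.comp (ϱ.continuous.comp (cons_continuous n i))).mul
      (a.continuous.comp (cons_continuous n i))⟩

lemma isClopen_cyl (n : ℕ) (i : Fin n) : IsClopen {x : BSpace n | x 0 = i} :=
  (isClopen_discrete ({i} : Set (Fin n))).preimage (continuous_apply 0)

/-- The power `ϱ^r` of the (strictly positive) potential, as a continuous map. -/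
def rhoPow (n : ℕ) (ϱ : C(BSpace n, ℝ)) (hϱ : ∀ x, 0 < ϱ x) (r : ℝ) : C(BSpace n, ℝ) :=
  ⟨fun x => ϱ x ^ r, ϱ.continuous.rpow_const fun x => Or.inl (hϱ x).ne'⟩

/-- The complex-valued power `ϱ^r` of the potential, as a continuous map. -/
def rhoPowC (n : ℕ) (ϱ : C(BSpace n, ℝ)) (hϱ : ∀ x, 0 < ϱ x) (r : ℝ) : C(BSpace n, ℂ) :=
  ⟨fun x => ((ϱ x ^ r : ℝ) : ℂ), Complex.continuous_ofReal.comp (rhoPow n ϱ hϱ r).continuous⟩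

/-- The continuous function `g·1_{X_i}` (product of `g` with the indicator of the clopen
cylinder `X_i = {x : x₁ = i}`), as a complex-valued continuous map. -/
def wInd (n : ℕ) (i : Fin n) (g : C(BSpace n, ℝ)) : C(BSpace n, ℂ) :=
  ⟨fun x => if x 0 = i then (g x : ℂ) else 0, by
    refine Continuous.if (fun x hx => ?_)
      (Complex.continuous_ofReal.comp g.continuous) continuous_const
    rw [(isClopen_cyl n i).frontier_eq] at hx
    exact absurd hx (Set.notMem_empty x)⟩

/-- The operator `T_i = π(ϱ^{-1/p}·1_{X_i}) T`. -/
def TOp {A : Type*} [Mul A] (n : ℕ) (ϱ : C(BSpace n, ℝ)) (hϱ : ∀ x, 0 < ϱ x) (p : ℝ≥0∞)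
    (π : C(BSpace n, ℂ) → A) (T : A) (i : Fin n) : A :=
  π (wInd n i (rhoPow n ϱ hϱ (-(1 / p.toReal)))) * T

/-- The operator `S_i = S π(ϱ^{-1/q}·1_{X_i})`, where `1/q = 1 - 1/p`
(with the convention `ϱ^{-1/q} = ϱ^0 = 1` when `p = 1`). -/
def SOp {A : Type*} [Mul A] (n : ℕ) (ϱ : C(BSpace n, ℝ)) (hϱ : ∀ x, 0 < ϱ x) (p : ℝ≥0∞)
    (π : C(BSpace n, ℂ) → A) (S : A) (i : Fin n) : A :=
  S * π (wInd n i (rhoPow n ϱ hϱ (-(1 - 1 / p.toReal))))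

/-- The indicator of the cylinder set `X_{i₁…i_N} = {x : x₁ = i₁, …, x_N = i_N}`
determined by the word `w = (i₁,…,i_N)`, as a continuous map. -/
def cylCM (n N : ℕ) (w : Fin N → Fin n) : C(BSpace n, ℂ) :=
  ⟨fun x => if (fun k : Fin N => x k) = w then 1 else 0, by
    have hclopen : IsClopen {x : BSpace n | (fun k : Fin N => x k) = w} :=
      (isClopen_discrete ({w} : Set (Fin N → Fin n))).preimage
        (continuous_pi fun k => continuous_apply (k : ℕ))
    refine Continuous.if (fun x hx => ?_) continuous_const continuous_const
    rw [hclopen.frontier_eq] at hx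
    exact absurd hx (Set.notMem_empty x)⟩

section Cylinders

variable {n : ℕ}

lemma wInd_one_mul_wInd_of_ne {i j : Fin n} (h : j ≠ i) (g : C(BSpace n, ℝ)) :
    wInd n i 1 * wInd n j g = 0 := by
  ext x
  simp only [ContinuousMap.mul_apply, ContinuousMap.zero_apply, wInd, ContinuousMap.coe_mk]
  split_ifs with hi hj
  · exact absurd (hi.symm.trans hj).symm h
  all_goals simp

lemma wInd_one_mul_wInd_self (i : Fin n) (g : C(BSpace n, ℝ)) :
    wInd n i 1 * wInd n i g = wInd n i g := by
  ext x
  simp only [ContinuousMap.mul_apply, wInd, ContinuousMap.coe_mk]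
  split_ifs <;> simp

lemma cylCM_zero (w : Fin 0 → Fin n) : cylCM n 0 w = 1 := by
  ext x
  simp [cylCM, Subsingleton.elim _ w]

lemma cylCM_succ (N : ℕ) (w : Fin (N + 1) → Fin n) :
    cylCM n (N + 1) w = wInd n (w 0) 1 * (cylCM n N (Fin.tail w)).comp (shiftCM n) := by
  ext x
  have hcons : ((fun k : Fin (N + 1) => x k) = w) ↔
      x 0 = w 0 ∧ (fun k : Fin N => x (k + 1)) = Fin.tail w := by
    simp [funext_iff, Fin.forall_fin_succ, Fin.tail]
  simp only [ContinuousMap.mul_apply, ContinuousMap.comp_apply, wInd, cylCM,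
    ContinuousMap.coe_mk, shiftCM, shift, hcons]
  split_ifs <;> simp_all

end Cylinders

section Covariant

variable {n : ℕ} {A F : Type*} [Semiring A] [FunLike F C(BSpace n, ℂ) A]
  [RingHomClass F C(BSpace n, ℂ) A] (π : F)

lemma map_wInd_mul_mul_mul_map_wInd {T S : A} {g h : C(BSpace n, ℝ)}
    (hcov : ∀ a : C(BSpace n, ℂ), T * π a = π (a.comp (shiftCM n)) * T)
    (hsum : ∑ j : Fin n, π (wInd n j g) * T * (S * π (wInd n j h)) = 1)
    (i : Fin n) (a : C(BSpace n, ℂ)) :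
    π (wInd n i g) * T * π a * (S * π (wInd n i h)) =
      π (wInd n i 1 * a.comp (shiftCM n)) := by
  set b := wInd n i 1 * a.comp (shiftCM n)
  have hterm : ∀ j, j ≠ i → π b * (π (wInd n j g) * T * (S * π (wInd n j h))) = 0 := by
    intro j hj
    have hbj : b * wInd n j g = 0 := by rw [mul_right_comm, wInd_one_mul_wInd_of_ne hj, zero_mul]
    simp only [← mul_assoc, ← map_mul, hbj, map_zero, zero_mul]
  have hbi : b * wInd n i g = wInd n i g * a.comp (shiftCM n) := by
    rw [mul_right_comm, wInd_one_mul_wInd_self]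
  calc π (wInd n i g) * T * π a * (S * π (wInd n i h))
      = π (wInd n i g) * (T * π a) * (S * π (wInd n i h)) := by
        simp only [mul_assoc]
    _ = π b * (π (wInd n i g) * T * (S * π (wInd n i h))) := by
        rw [hcov, ← mul_assoc (π _) (π _), ← map_mul, ← hbi, map_mul]
        simp only [mul_assoc]
    _ = π b * ∑ j : Fin n, π (wInd n j g) * T * (S * π (wInd n j h)) := by
        rw [Finset.mul_sum, Finset.sum_eq_single i (fun j _ => hterm j) (by simp)]
    _ = π b := by rw [hsum, mul_one]

lemma prod_ofFn_mul_prod_reverse_ofFn_eq_map_cylCM (t s : Fin n → A)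
    (hts : ∀ i a, t i * π a * s i = π (wInd n i 1 * a.comp (shiftCM n)))
    (N : ℕ) (w : Fin N → Fin n) :
    (List.ofFn fun k => t (w k)).prod * (List.ofFn fun k => s (w k)).reverse.prod =
      π (cylCM n N w) := by
  induction N with
  | zero => simp [cylCM_zero]
  | succ N ih =>
    rw [List.ofFn_succ, List.ofFn_succ, List.prod_cons, List.reverse_cons, List.prod_append,
      List.prod_singleton, cylCM_succ, ← hts, ← ih (Fin.tail w)]
    simp only [Fin.tail, mul_assoc]

end Covariant

theorem stmt_7_general (n : ℕ)
    (ϱ : C(BSpace n, ℝ)) (hϱpos : ∀ x, 0 < ϱ x)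
    {Ω : Type*} [MeasurableSpace Ω] (ν : Measure Ω)
    (p : ℝ≥0∞) [Fact (1 ≤ p)]
    (π : C(BSpace n, ℂ) →ₐ[ℂ] (Lp ℂ p ν →L[ℂ] Lp ℂ p ν))
    (T S : Lp ℂ p ν →L[ℂ] Lp ℂ p ν)
    (hcov2 : ∀ a : C(BSpace n, ℂ), T * π a = π (a.comp (shiftCM n)) * T)
    (hsum : ∑ i : Fin n,
      TOp n ϱ hϱpos p (fun a => π a) T i * SOp n ϱ hϱpos p (fun a => π a) S i = 1)
    :
    ∀ (N : ℕ), 1 ≤ N → ∀ w : Fin N → Fin n,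
      (List.ofFn fun k : Fin N => TOp n ϱ hϱpos p (fun a => π a) T (w k)).prod *
        ((List.ofFn fun k : Fin N => SOp n ϱ hϱpos p (fun a => π a) S (w k)).reverse).prod
          = π (cylCM n N w) :=
  fun N _ w => prod_ofFn_mul_prod_reverse_ofFn_eq_map_cylCM π _ _
    (map_wInd_mul_mul_mul_map_wInd π hcov2 hsum) N w

/-- For a covariant representation `(π,T,S)` of `L` on `L^p_ν(Ω)`:
for every `N ≥ 1` and every word `(i₁,…,i_N) ∈ {1,…,n}^N` one has
`T_{i₁}⋯T_{i_N} S_{i_N}⋯S_{i₁} = π(1_{X_{i₁…i_N}})`, where `X_{i₁…i_N}` is the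
cylinder set determined by the word. -/
theorem stmt_7 (n : ℕ) (hn : 2 ≤ n)
    (ϱ : C(BSpace n, ℝ)) (hϱpos : ∀ x, 0 < ϱ x)
    (hϱsum : ∀ y : BSpace n, ∑ i : Fin n, ϱ (cons n i y) = 1)
    {Ω : Type*} [MeasurableSpace Ω] (ν : Measure Ω)
    (p : ℝ≥0∞) [Fact (1 ≤ p)] (hp : p ≠ ∞)
    (π : C(BSpace n, ℂ) →ₐ[ℂ] (Lp ℂ p ν →L[ℂ] Lp ℂ p ν))
    (T S : Lp ℂ p ν →L[ℂ] Lp ℂ p ν)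
    (hπcontr : ∀ a : C(BSpace n, ℂ), ‖π a‖ ≤ ‖a‖)
    (hT : ‖T‖ ≤ 1) (hS : ‖S‖ ≤ 1)
    (hcov1 : ∀ a : C(BSpace n, ℂ), S * π a * T = π (transfer n ϱ a))
    (hcov2 : ∀ a : C(BSpace n, ℂ), T * π a = π (a.comp (shiftCM n)) * T)
    (hTi : ∀ i : Fin n, ‖TOp n ϱ hϱpos p (fun a => π a) T i‖ ≤ 1)
    (hSi : ∀ i : Fin n, ‖SOp n ϱ hϱpos p (fun a => π a) S i‖ ≤ 1)
    (hsum : ∑ i : Fin n,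
      TOp n ϱ hϱpos p (fun a => π a) T i * SOp n ϱ hϱpos p (fun a => π a) S i = 1)
    :
    ∀ (N : ℕ), 1 ≤ N → ∀ w : Fin N → Fin n,
      (List.ofFn fun k : Fin N => TOp n ϱ hϱpos p (fun a => π a) T (w k)).prod *
        ((List.ofFn fun k : Fin N => SOp n ϱ hϱpos p (fun a => π a) S (w k)).reverse).prod
          = π (cylCM n N w) :=
  stmt_7_general n ϱ hϱpos ν p π T S hcov2 hsum

end
end

section
/- For every a ∈ C(X), every N ≥ 1 and every f ∈ L^p_μ(X) one has ∫_X |((π(a)T_φ)^N f)|^p dμ = ∫_X (π(|a|^p)T_φ)^N (|f|^p) dμ, where on the right-hand side π(|a|^p)T_φ : g ↦ |a|^p·(g∘φ) acts on L¹_μ(X). Consequently ‖(π(a)T_φ)^N‖_{B(L^p_μ(X))}^p = ‖(π(|a|^p)T_φ)^N‖_{B(L¹_μ(X))} for every N ≥ 1. -/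
open MeasureTheory
open scoped ENNReal

noncomputable section

/-! The invariance `L*μ = μ` together with `L(a ∘ φ) = a` makes `μ` shift-invariant, so
composition with `φ^N` respects a.e. equality. Iterating then gives
`(π(a)T_φ)^N f = (∏_{k<N} a ∘ φ^k) · (f ∘ φ^N)`, whence pointwise
`|(π(|a|^p)T_φ)^N h| = |(π(a)T_φ)^N f|^p` as soon as `|h| = |f|^p`. Integrating gives the first
identity; for the norms, `f ↦ |f|^p` turns `‖·‖_p^p` into `‖·‖₁`, and every `h ∈ L¹` has the
same modulus as `|f|^p` for `f = |h|^{1/p}`. -/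

lemma ContinuousLinearMap.opNorm_rpow_eq_of_forall_exists {𝕜 𝕜' E F E' F' : Type*}
    [NontriviallyNormedField 𝕜] [NontriviallyNormedField 𝕜'] [NormedAddCommGroup E]
    [NormedAddCommGroup F] [NormedAddCommGroup E'] [NormedAddCommGroup F'] [NormedSpace 𝕜 E]
    [NormedSpace 𝕜 F] [NormedSpace 𝕜' E'] [NormedSpace 𝕜' F'] (U : E →L[𝕜] F)
    (V : E' →L[𝕜'] F') {r : ℝ} (hr : 0 < r)
    (hUV : ∀ x, ∃ y, ‖y‖ = ‖x‖ ^ r ∧ ‖V y‖ = ‖U x‖ ^ r)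
    (hVU : ∀ y, ∃ x, ‖x‖ ^ r = ‖y‖ ∧ ‖V y‖ = ‖U x‖ ^ r) :
    ‖U‖ ^ r = ‖V‖ := by
  refine le_antisymm ?_ (V.opNorm_le_bound (by positivity) fun y => ?_)
  · have hU : ‖U‖ ≤ ‖V‖ ^ r⁻¹ := U.opNorm_le_bound (by positivity) fun x => by
      obtain ⟨y, hy, hVy⟩ := hUV x
      calc ‖U x‖ = ‖V y‖ ^ r⁻¹ := by rw [hVy, Real.rpow_rpow_inv (norm_nonneg _) hr.ne']
        _ ≤ (‖V‖ * ‖y‖) ^ r⁻¹ :=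
          Real.rpow_le_rpow (norm_nonneg _) (V.le_opNorm y) (by positivity)
        _ = ‖V‖ ^ r⁻¹ * ‖x‖ := by
          rw [Real.mul_rpow (norm_nonneg _) (norm_nonneg _), hy,
            Real.rpow_rpow_inv (norm_nonneg _) hr.ne']
    calc ‖U‖ ^ r ≤ (‖V‖ ^ r⁻¹) ^ r := Real.rpow_le_rpow (norm_nonneg _) hU hr.le
      _ = ‖V‖ := Real.rpow_inv_rpow (norm_nonneg _) hr.ne'
  · obtain ⟨x, hx, hVy⟩ := hVU y
    calc ‖V y‖ = ‖U x‖ ^ r := hVy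
      _ ≤ (‖U‖ * ‖x‖) ^ r := Real.rpow_le_rpow (norm_nonneg _) (U.le_opNorm x) hr.le
      _ = ‖U‖ ^ r * ‖y‖ := by rw [Real.mul_rpow (norm_nonneg _) (norm_nonneg _), hx]

namespace MeasureTheory

section LpNorm

variable {α : Type*} [MeasurableSpace α] {μ : Measure α} {p : ℝ≥0∞} [Fact (1 ≤ p)]

lemma Lp.norm_rpow_eq_integral_norm_rpow {E : Type*} [NormedAddCommGroup E] (hp : p ≠ ∞)
    (f : Lp E p μ) : ‖f‖ ^ p.toReal = ∫ x, ‖f x‖ ^ p.toReal ∂μ := by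
  have hp0 : p ≠ 0 := (zero_lt_one.trans_le Fact.out).ne'
  have hint : 0 ≤ ∫ x, ‖f x‖ ^ p.toReal ∂μ :=
    integral_nonneg fun x => Real.rpow_nonneg (norm_nonneg _) _
  rw [Lp.norm_def, (Lp.memLp f).eLpNorm_eq_integral_rpow_norm hp0 hp,
    ENNReal.toReal_ofReal (Real.rpow_nonneg hint _),
    Real.rpow_inv_rpow hint (ENNReal.toReal_pos hp0 hp).ne']

lemma L1.norm_eq_norm_rpow_of_ae_eq {E F : Type*} [NormedAddCommGroup E] [NormedAddCommGroup F]
    (hp : p ≠ ∞) {h : Lp F 1 μ} {f : Lp E p μ}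
    (hhf : (fun x => ‖h x‖) =ᵐ[μ] fun x => ‖f x‖ ^ p.toReal) :
    ‖h‖ = ‖f‖ ^ p.toReal := by
  rw [L1.norm_eq_integral_norm, integral_congr_ae hhf, Lp.norm_rpow_eq_integral_norm_rpow hp]

variable {𝕜 : Type*} [RCLike 𝕜]

lemma Lp.exists_L1_norm_ae_eq_norm_rpow (hp : p ≠ ∞) (f : Lp 𝕜 p μ) :
    ∃ h : Lp 𝕜 1 μ, (fun x => ‖h x‖) =ᵐ[μ] fun x => ‖f x‖ ^ p.toReal := by
  have hp0 : p ≠ 0 := (zero_lt_one.trans_le Fact.out).ne'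
  have hmem : MemLp (fun x => ((‖f x‖ ^ p.toReal : ℝ) : 𝕜)) 1 μ :=
    ((Lp.memLp f).norm_rpow hp0 hp).ofReal
  refine ⟨hmem.toLp _, ?_⟩
  filter_upwards [hmem.coeFn_toLp] with x hx
  rw [hx, RCLike.norm_ofReal, abs_of_nonneg (Real.rpow_nonneg (norm_nonneg _) _)]

lemma L1.exists_Lp_norm_rpow_ae_eq_norm (hp : p ≠ ∞) (h : Lp 𝕜 1 μ) :
    ∃ f : Lp 𝕜 p μ, (fun x => ‖f x‖ ^ p.toReal) =ᵐ[μ] fun x => ‖h x‖ := by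
  have hp0 : p ≠ 0 := (zero_lt_one.trans_le Fact.out).ne'
  have hmem : MemLp (fun x => ((‖h x‖ ^ p.toReal⁻¹ : ℝ) : 𝕜)) p μ := by
    have := (memLp_norm_rpow_iff (Lp.aestronglyMeasurable h) (ENNReal.inv_ne_zero.mpr hp)
      (ENNReal.inv_ne_top.mpr hp0)).mpr (Lp.memLp h)
    rw [one_div, inv_inv, ENNReal.toReal_inv] at this
    exact this.ofReal
  refine ⟨hmem.toLp _, ?_⟩
  filter_upwards [hmem.coeFn_toLp] with x hx
  rw [hx, RCLike.norm_ofReal, abs_of_nonneg (Real.rpow_nonneg (norm_nonneg _) _),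
    Real.rpow_inv_rpow (norm_nonneg _) (ENNReal.toReal_pos hp0 hp).ne']

lemma Lp.opNorm_rpow_eq_of_ae_norm_rpow (hp : p ≠ ∞) (U : Lp 𝕜 p μ →L[𝕜] Lp 𝕜 p μ)
    (V : Lp 𝕜 1 μ →L[𝕜] Lp 𝕜 1 μ)
    (hUV : ∀ f h, ((fun x => ‖h x‖) =ᵐ[μ] fun x => ‖f x‖ ^ p.toReal) →
      (fun x => ‖V h x‖) =ᵐ[μ] fun x => ‖U f x‖ ^ p.toReal) :
    ‖U‖ ^ p.toReal = ‖V‖ := by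
  have hp0 : p ≠ 0 := (zero_lt_one.trans_le Fact.out).ne'
  refine U.opNorm_rpow_eq_of_forall_exists V (ENNReal.toReal_pos hp0 hp) (fun f => ?_) fun h => ?_
  · obtain ⟨h, hh⟩ := Lp.exists_L1_norm_ae_eq_norm_rpow hp f
    exact ⟨h, L1.norm_eq_norm_rpow_of_ae_eq hp hh,
      L1.norm_eq_norm_rpow_of_ae_eq hp (hUV f h hh)⟩
  · obtain ⟨f, hf⟩ := L1.exists_Lp_norm_rpow_ae_eq_norm hp h
    exact ⟨f, (L1.norm_eq_norm_rpow_of_ae_eq hp hf.symm).symm,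
      L1.norm_eq_norm_rpow_of_ae_eq hp (hUV f h hf.symm)⟩

end LpNorm

section WeightedComposition

variable {α : Type*} [MeasurableSpace α] {μ : Measure α} {S : α → α} {p : ℝ≥0∞} [Fact (1 ≤ p)]

lemma pow_apply_ae_eq_prod_mul_comp_iterate {𝕜 : Type*} [NormedField 𝕜]
    (hS : MeasurePreserving S μ μ) {w : α → 𝕜} {T : Lp 𝕜 p μ →L[𝕜] Lp 𝕜 p μ}
    (hT : ∀ f, T f =ᵐ[μ] fun x => w x * f (S x)) (N : ℕ) (f : Lp 𝕜 p μ) :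
    (T ^ N) f =ᵐ[μ] fun x => (∏ k ∈ Finset.range N, w (S^[k] x)) * f (S^[N] x) := by
  induction N generalizing f with
  | zero => simp
  | succ N ih =>
    rw [pow_succ, mul_apply_eq_comp]
    filter_upwards [ih (T f), (hS.iterate N).quasiMeasurePreserving.ae_eq_comp (hT f)]
      with x hx hTx
    simp only [Function.comp_apply] at hTx
    rw [hx, hTx, Function.iterate_succ_apply', Finset.prod_range_succ]
    ring

variable {𝕜 : Type*} [RCLike 𝕜] {a : α → 𝕜} {A : Lp 𝕜 p μ →L[𝕜] Lp 𝕜 p μ}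
  {B : Lp 𝕜 1 μ →L[𝕜] Lp 𝕜 1 μ}

lemma norm_rpow_pow_apply_ae_eq (hS : MeasurePreserving S μ μ)
    (hA : ∀ f, A f =ᵐ[μ] fun x => a x * f (S x)) (N : ℕ) (f : Lp 𝕜 p μ) :
    (fun x => ‖(A ^ N) f x‖ ^ p.toReal) =ᵐ[μ]
      fun x => (∏ k ∈ Finset.range N, ‖a (S^[k] x)‖ ^ p.toReal) * ‖f (S^[N] x)‖ ^ p.toReal := by
  filter_upwards [pow_apply_ae_eq_prod_mul_comp_iterate hS hA N f] with x hx
  rw [hx, norm_mul, Real.mul_rpow (norm_nonneg _) (norm_nonneg _), norm_prod,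
    Real.finsetProd_rpow _ _ fun _ _ => norm_nonneg _]

lemma pow_apply_ae_eq_ofReal_norm_rpow (hS : MeasurePreserving S μ μ)
    (hA : ∀ f, A f =ᵐ[μ] fun x => a x * f (S x))
    (hB : ∀ g, B g =ᵐ[μ] fun x => ((‖a x‖ ^ p.toReal : ℝ) : 𝕜) * g (S x))
    (N : ℕ) (f : Lp 𝕜 p μ) (h : Lp 𝕜 1 μ)
    (hh : h =ᵐ[μ] fun x => ((‖f x‖ ^ p.toReal : ℝ) : 𝕜)) :
    (B ^ N) h =ᵐ[μ] fun x => ((‖(A ^ N) f x‖ ^ p.toReal : ℝ) : 𝕜) := by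
  filter_upwards [norm_rpow_pow_apply_ae_eq hS hA N f,
    pow_apply_ae_eq_prod_mul_comp_iterate hS hB N h,
    (hS.iterate N).quasiMeasurePreserving.ae_eq_comp hh] with x hAx hBx hhx
  simp only [Function.comp_apply] at hhx
  rw [hAx, hBx, hhx]
  norm_cast

lemma norm_pow_apply_ae_eq_norm_rpow (hS : MeasurePreserving S μ μ)
    (hA : ∀ f, A f =ᵐ[μ] fun x => a x * f (S x))
    (hB : ∀ g, B g =ᵐ[μ] fun x => ((‖a x‖ ^ p.toReal : ℝ) : 𝕜) * g (S x))
    (N : ℕ) (f : Lp 𝕜 p μ) (h : Lp 𝕜 1 μ)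
    (hh : (fun x => ‖h x‖) =ᵐ[μ] fun x => ‖f x‖ ^ p.toReal) :
    (fun x => ‖(B ^ N) h x‖) =ᵐ[μ] fun x => ‖(A ^ N) f x‖ ^ p.toReal := by
  filter_upwards [norm_rpow_pow_apply_ae_eq hS hA N f,
    pow_apply_ae_eq_prod_mul_comp_iterate hS hB N h,
    (hS.iterate N).quasiMeasurePreserving.ae_eq_comp hh] with x hAx hBx hhx
  rw [hAx, hBx, norm_mul, norm_prod]
  simp only [Function.comp_apply, RCLike.norm_ofReal] at hhx ⊢
  rw [hhx]
  simp only [abs_of_nonneg (Real.rpow_nonneg (norm_nonneg _) _)]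

end WeightedComposition

end MeasureTheory

section Shift

variable {n : ℕ} {ϱ : C(BSpace n, ℝ)}

lemma shift_cons (i : Fin n) (y : BSpace n) : shift n (cons n i y) = y := rfl

lemma transfer_comp_shiftCM (hϱsum : ∀ y : BSpace n, ∑ i : Fin n, ϱ (cons n i y) = 1)
    (a : C(BSpace n, ℂ)) : transfer n ϱ (a.comp (shiftCM n)) = a := by
  ext y
  simp only [transfer, shiftCM, ContinuousMap.coe_mk, ContinuousMap.comp_apply, shift_cons,
    ← Finset.sum_mul]
  rw [← Complex.ofReal_sum, hϱsum y, Complex.ofReal_one, one_mul]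

variable {μ : Measure (BSpace n)}

lemma integral_comp_shift (hϱsum : ∀ y : BSpace n, ∑ i : Fin n, ϱ (cons n i y) = 1)
    (hμ : ∀ a : C(BSpace n, ℂ), ∫ y, transfer n ϱ a y ∂μ = ∫ y, a y ∂μ)
    (a : C(BSpace n, ℂ)) : ∫ x, a (shift n x) ∂μ = ∫ x, a x ∂μ := by
  have h := hμ (a.comp (shiftCM n))
  rw [transfer_comp_shiftCM hϱsum] at h
  exact h.symm

lemma measurePreserving_shift [IsFiniteMeasure μ]
    (hϱsum : ∀ y : BSpace n, ∑ i : Fin n, ϱ (cons n i y) = 1)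
    (hμ : ∀ a : C(BSpace n, ℂ), ∫ y, transfer n ϱ a y ∂μ = ∫ y, a y ∂μ) :
    MeasurePreserving (shift n) μ μ := by
  refine ⟨(shift_continuous n).measurable,
    ext_of_forall_integral_eq_of_IsFiniteMeasure fun g => ?_⟩
  rw [integral_map (shift_continuous n).aemeasurable g.continuous.aestronglyMeasurable]
  have h := integral_comp_shift hϱsum hμ ⟨fun x => (g x : ℂ), by fun_prop⟩
  simp only [ContinuousMap.coe_mk, integral_complex_ofReal] at h
  exact_mod_cast h

end Shift

theorem stmt_13_general (n : ℕ)
    (ϱ : C(BSpace n, ℝ))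
    (hϱsum : ∀ y : BSpace n, ∑ i : Fin n, ϱ (cons n i y) = 1)
    (μ : Measure (BSpace n)) [IsProbabilityMeasure μ]
    (hμ : ∀ a : C(BSpace n, ℂ), ∫ y, transfer n ϱ a y ∂μ = ∫ y, a y ∂μ)
    (p : ℝ≥0∞) [Fact (1 ≤ p)] (hp : p ≠ ∞)
    (a : C(BSpace n, ℂ))
    (A : Lp ℂ p μ →L[ℂ] Lp ℂ p μ)
    (hA : ∀ f : Lp ℂ p μ, (A f : BSpace n → ℂ) =ᵐ[μ] fun x => a x * f (shift n x))
    (B : Lp ℂ 1 μ →L[ℂ] Lp ℂ 1 μ)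
    (hB : ∀ g : Lp ℂ 1 μ,
      (B g : BSpace n → ℂ) =ᵐ[μ] fun x => ((‖a x‖ ^ p.toReal : ℝ) : ℂ) * g (shift n x)) :
    (∀ (N : ℕ), 1 ≤ N → ∀ (f : Lp ℂ p μ) (h : Lp ℂ 1 μ),
      ((h : BSpace n → ℂ) =ᵐ[μ] fun x => ((‖f x‖ ^ p.toReal : ℝ) : ℂ)) →
      ((∫ x, ‖((A ^ N) f : BSpace n → ℂ) x‖ ^ p.toReal ∂μ : ℝ) : ℂ)
        = ∫ x, ((B ^ N) h : BSpace n → ℂ) x ∂μ) ∧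
    (∀ (N : ℕ), 1 ≤ N → ‖A ^ N‖ ^ p.toReal = ‖B ^ N‖) := by
  have hS := measurePreserving_shift hϱsum hμ
  refine ⟨fun N _ f h hh => ?_, fun N _ => ?_⟩
  · rw [integral_congr_ae (pow_apply_ae_eq_ofReal_norm_rpow hS hA hB N f h hh)]
    exact integral_ofReal.symm
  · exact Lp.opNorm_rpow_eq_of_ae_norm_rpow hp _ _ fun f h hh =>
      norm_pow_apply_ae_eq_norm_rpow hS hA hB N f h hh

/-- For every `a ∈ C(X)`, every `N ≥ 1` and every `f ∈ L^p_μ(X)` one has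
`∫_X |((π(a)T_φ)^N f)|^p dμ = ∫_X (π(|a|^p)T_φ)^N (|f|^p) dμ`, where on the right-hand side
`π(|a|^p)T_φ : g ↦ |a|^p·(g∘φ)` acts on `L¹_μ(X)`. Consequently
`‖(π(a)T_φ)^N‖_{B(L^p)}^p = ‖(π(|a|^p)T_φ)^N‖_{B(L¹)}` for every `N ≥ 1`. -/
theorem stmt_13 (n : ℕ) (hn : 2 ≤ n)
    (ϱ : C(BSpace n, ℝ)) (hϱpos : ∀ x, 0 < ϱ x)
    (hϱsum : ∀ y : BSpace n, ∑ i : Fin n, ϱ (cons n i y) = 1)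
    (μ : Measure (BSpace n)) [IsProbabilityMeasure μ]
    (hμ : ∀ a : C(BSpace n, ℂ), ∫ y, transfer n ϱ a y ∂μ = ∫ y, a y ∂μ)
    (p : ℝ≥0∞) [Fact (1 ≤ p)] (hp : p ≠ ∞)
    (a : C(BSpace n, ℂ))
    (A : Lp ℂ p μ →L[ℂ] Lp ℂ p μ)
    (hA : ∀ f : Lp ℂ p μ, (A f : BSpace n → ℂ) =ᵐ[μ] fun x => a x * f (shift n x))
    (B : Lp ℂ 1 μ →L[ℂ] Lp ℂ 1 μ)
    (hB : ∀ g : Lp ℂ 1 μ,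
      (B g : BSpace n → ℂ) =ᵐ[μ] fun x => ((‖a x‖ ^ p.toReal : ℝ) : ℂ) * g (shift n x)) :
    (∀ (N : ℕ), 1 ≤ N → ∀ (f : Lp ℂ p μ) (h : Lp ℂ 1 μ),
      ((h : BSpace n → ℂ) =ᵐ[μ] fun x => ((‖f x‖ ^ p.toReal : ℝ) : ℂ)) →
      ((∫ x, ‖((A ^ N) f : BSpace n → ℂ) x‖ ^ p.toReal ∂μ : ℝ) : ℂ)
        = ∫ x, ((B ^ N) h : BSpace n → ℂ) x ∂μ) ∧
    (∀ (N : ℕ), 1 ≤ N → ‖A ^ N‖ ^ p.toReal = ‖B ^ N‖) :=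
  stmt_13_general n ϱ hϱsum μ hμ p hp a A hA B hB

end
end
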